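/- arXiv:2402.10818 — 4 statements merged into one kernel-verified Lean document; each statement's English description precedes it below -/
import Mathlib

section
/- Let P ⊂ R^d be a polytope with n distinct vertices v_1,...,v_n (n ≥ 3) and let φ(p) = Σ_i p_i v_i for p ∈ Δ_n. For each vertex v_k there exists ε > 0 such that for every u ∈ P with ‖u - v_k‖ < ε and every p ∈ Δ_n with φ(p) = u, the index k is the unique mode of p, i.e., p_k > p_i for all i ≠ k. -/
/-!
Since `v k` is not in the convex hull `S` of the other vertices, which is compact, some `δ > 0`
separates `v k` from `S`. Writing `φ(p) = p k • v k + (1 - p k) • q` with `q ∈ S`, we get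
`‖φ(p) - v k‖ ≥ (1 - p k) δ`, so `‖φ(p) - v k‖ < δ / 2` forces `1 - p k < 1 / 2`; as every other
weight is at most `1 - p k`, it is below `1 / 2 < p k`.
-/

open Finset

lemma IsClosed.exists_pos_forall_le_norm_sub {E : Type*} [SeminormedAddCommGroup E] {S : Set E}
    (hS : IsClosed S) {x : E} (hx : x ∉ S) : ∃ δ > 0, ∀ q ∈ S, δ ≤ ‖q - x‖ := by
  obtain ⟨δ, hδ, hball⟩ := Metric.isOpen_iff.mp hS.isOpen_compl x hx
  refine ⟨δ, hδ, fun q hq => ?_⟩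
  by_contra! h
  exact hball (by rwa [Metric.mem_ball, dist_eq_norm]) hq

lemma stdSimplex_apply_le_one_sub {ι : Type*} [Fintype ι] {p : ι → ℝ} (hp : p ∈ stdSimplex ℝ ι)
    {i k : ι} (hik : i ≠ k) : p i ≤ 1 - p k := by
  have := add_le_sum (fun j _ => hp.1 j) (mem_univ i) (mem_univ k) hik
  linarith [hp.2]

section

variable {E ι : Type*} [AddCommGroup E] [Module ℝ E] [Fintype ι] [DecidableEq ι]

lemma sum_erase_eq_one_sub {p : ι → ℝ} (hp : ∑ i, p i = 1) (k : ι) :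
    ∑ i ∈ univ.erase k, p i = 1 - p k := by
  rw [sum_erase_eq_sub (mem_univ k), hp]

lemma sum_smul_sub_eq_smul_centerMass_sub (v : ι → E) {p : ι → ℝ} (hp : ∑ i, p i = 1) {k : ι}
    (hk : p k ≠ 1) :
    ∑ i, p i • v i - v k = (1 - p k) • ((univ.erase k).centerMass p v - v k) := by
  have hs : 1 - p k ≠ 0 := sub_ne_zero.mpr hk.symm
  rw [smul_sub, centerMass, sum_erase_eq_one_sub hp, smul_smul, mul_inv_cancel₀ hs, one_smul,
    ← add_sum_erase _ _ (mem_univ k), sub_smul, one_smul]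
  abel

end

lemma one_sub_mul_le_norm_sum_smul_sub {E ι : Type*} [SeminormedAddCommGroup E] [NormedSpace ℝ E]
    [Fintype ι] (v : ι → E) (k : ι) {δ : ℝ}
    (hδ : ∀ q ∈ convexHull ℝ (v '' {k}ᶜ), δ ≤ ‖q - v k‖) {p : ι → ℝ}
    (hp : p ∈ stdSimplex ℝ ι) : (1 - p k) * δ ≤ ‖∑ i, p i • v i - v k‖ := by
  classical
  rcases eq_or_ne (p k) 1 with hk | hk
  · simp [hk]
  have hpos : 0 < 1 - p k := sub_pos.mpr ((mem_Icc_of_mem_stdSimplex hp k).2.lt_of_ne hk)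
  have hmem : (univ.erase k).centerMass p v ∈ convexHull ℝ (v '' {k}ᶜ) :=
    centerMass_mem_convexHull _ (fun i _ => hp.1 i) (sum_erase_eq_one_sub hp.2 k ▸ hpos)
      fun i hi => Set.mem_image_of_mem v (ne_of_mem_erase hi)
  rw [sum_smul_sub_eq_smul_centerMass_sub v hp.2 hk, norm_smul, Real.norm_of_nonneg hpos.le]
  exact mul_le_mul_of_nonneg_left (hδ _ hmem) hpos.le

theorem unique_mode_near_vertex_general (d n : ℕ)
    (v : Fin n → EuclideanSpace ℝ (Fin d)) (hinj : Function.Injective v)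
    (hext : ∀ i, v i ∉ convexHull ℝ (Set.range v \ {v i})) (k : Fin n) :
    ∃ ε > 0, ∀ u ∈ convexHull ℝ (Set.range v), ‖u - v k‖ < ε →
      ∀ p ∈ stdSimplex ℝ (Fin n), (∑ i, p i • v i) = u → ∀ i, i ≠ k → p i < p k := by
  have hclosed : IsClosed (convexHull ℝ (v '' {k}ᶜ)) :=
    ((Set.finite_range v).subset (Set.image_subset_range _ _)).isClosed_convexHull ℝ
  have hnot : v k ∉ convexHull ℝ (v '' {k}ᶜ) := by
    rw [Set.image_compl_eq_range_sdiff_image hinj, Set.image_singleton]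
    exact hext k
  obtain ⟨δ, hδ, hsep⟩ := hclosed.exists_pos_forall_le_norm_sub hnot
  refine ⟨δ / 2, half_pos hδ, fun u _ hu p hp hpu i hik => ?_⟩
  have hfar := one_sub_mul_le_norm_sum_smul_sub v k hsep hp
  rw [hpu] at hfar
  have hrest : 1 - p k < 1 / 2 := lt_of_mul_lt_mul_right (by linarith) hδ.le
  linarith [stdSimplex_apply_le_one_sub hp hik]

/-- Near each vertex of a polytope there is an ε-ball on which every embedded distribution has
that vertex's outcome as its unique mode. -/
theorem unique_mode_near_vertex (d n : ℕ) (hn : 3 ≤ n)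
    (v : Fin n → EuclideanSpace ℝ (Fin d)) (hinj : Function.Injective v)
    (hext : ∀ i, v i ∉ convexHull ℝ (Set.range v \ {v i})) (k : Fin n) :
    ∃ ε > 0, ∀ u ∈ convexHull ℝ (Set.range v), ‖u - v k‖ < ε →
      ∀ p ∈ stdSimplex ℝ (Fin n), (∑ i, p i • v i) = u → ∀ i, i ≠ k → p i < p k :=
  unique_mode_near_vertex_general d n v hinj hext k
end

section
/- Let w = (0, 1/(βd), 2/(βd), ..., (d-1)/(βd)) ∈ R^d with β = (d-1)/2, and let P^w = conv({π·w : π ∈ S_d}) be the permutahedron on the orbit of w under coordinate permutations. Fix the identity permutation vertex w itself (sorted increasingly) and α with 0 < α < 1/d. Then every point of the scaled polytope conv({(1-α)w + α(π·w) : π ∈ S_d}) has strictly increasing coordinates: for every π ∈ S_d and every i ∈ {1,...,d-1}, ((1-α)w + α(π·w))_i < ((1-α)w + α(π·w))_{i+1}. -/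
/-!
At consecutive indices `i + 1 = j` the first summand of `(1 - α) w + α (π·w)` rises by
`(1 - α) / s`, while the second can fall by at most `α (d - 1) / s`, where `s` is the common
denominator of `w`; so the rise wins as soon as `α d < 1`. Strict increase along consecutive
indices is an intersection of open half-spaces, hence convex, so it passes to the convex hull.
-/

theorem convex_setOf_forall_succ_lt (d : ℕ) :
    Convex ℝ {u : Fin d → ℝ | ∀ i j : Fin d, (i : ℕ) + 1 = j → u i < u j} := by
  simp only [Set.ofPred_forall]
  refine convex_iInter fun i => convex_iInter fun j => convex_iInter fun _ => ?_
  have h : IsLinearMap ℝ fun u : Fin d → ℝ => u j - u i :=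
    (LinearMap.proj (R := ℝ) (φ := fun _ : Fin d => ℝ) j - LinearMap.proj i).isLinear
  simpa only [sub_pos] using convex_halfSpace_gt h 0

theorem one_sub_mul_add_mul_cast_lt_of_succ_eq {d : ℕ} {α : ℝ} (hα0 : 0 ≤ α) (hαd : α * d < 1)
    (σ : Fin d → Fin d) {i j : Fin d} (hij : (i : ℕ) + 1 = j) :
    (1 - α) * (i : ℝ) + α * (σ i : ℝ) < (1 - α) * (j : ℝ) + α * (σ j : ℝ) := by
  have hj : (j : ℝ) = i + 1 := by exact_mod_cast hij.symm
  have hσi : (σ i : ℝ) + 1 ≤ d := by exact_mod_cast (σ i).isLt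
  have hσj : (0 : ℝ) ≤ σ j := Nat.cast_nonneg _
  nlinarith [mul_le_mul_of_nonneg_left hσi hα0, mul_nonneg hα0 hσj]

theorem one_sub_mul_add_mul_lt_of_succ_eq {d : ℕ} {s α : ℝ} (hs : 0 < s) (hα0 : 0 ≤ α)
    (hαd : α * d < 1) {w : Fin d → ℝ} (hw : ∀ i : Fin d, w i = (i : ℝ) / s)
    (σ : Fin d → Fin d) {i j : Fin d} (hij : (i : ℕ) + 1 = j) :
    (1 - α) * w i + α * w (σ i) < (1 - α) * w j + α * w (σ j) := by
  simp only [hw, mul_div_assoc', ← add_div]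
  exact div_lt_div_of_pos_right (one_sub_mul_add_mul_cast_lt_of_succ_eq hα0 hαd σ hij) hs

/-- Scaled copies of the permutahedron anchored at the sorted vertex w, with scaling α < 1/d,
lie strictly inside the open ordering cone: all their points have strictly increasing
coordinates. -/
theorem permutahedron_scaled_copy_in_cone (d : ℕ) (hd : 2 ≤ d)
    (w : Fin d → ℝ) (hw : ∀ i : Fin d, w i = (i : ℝ) / ((((d:ℝ) - 1)/2) * d))
    (α : ℝ) (hα : 0 < α ∧ α < 1/(d:ℝ)) :
    (∀ u ∈ convexHull ℝ {x : Fin d → ℝ |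
        ∃ π : Equiv.Perm (Fin d), ∀ t, x t = (1 - α) * w t + α * w (π.symm t)},
      ∀ i j : Fin d, (i : ℕ) + 1 = (j : ℕ) → u i < u j) ∧
    ∀ π : Equiv.Perm (Fin d), ∀ i j : Fin d, (i : ℕ) + 1 = (j : ℕ) →
      (1 - α) * w i + α * w (π.symm i) < (1 - α) * w j + α * w (π.symm j) := by
  have hd' : (2 : ℝ) ≤ d := by exact_mod_cast hd
  have hs : 0 < (((d : ℝ) - 1) / 2) * d := by nlinarith
  have hαd : α * d < 1 := (lt_div_iff₀ (by linarith)).mp hα.2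
  have vertex_lt (π : Equiv.Perm (Fin d)) (i j : Fin d) (hij : (i : ℕ) + 1 = j) :=
    one_sub_mul_add_mul_lt_of_succ_eq hs hα.1.le hαd hw π.symm hij
  refine ⟨fun u hu => convexHull_min ?_ (convex_setOf_forall_succ_lt d) hu, vertex_lt⟩
  rintro x ⟨π, hx⟩ i j hij
  simpa only [hx] using vertex_lt π i j hij
end

section
/- With w and P^w as above (permutahedron with w = (0, 1/(βd), ..., (d-1)/(βd)), β = (d-1)/2) and 0 < α < 1/d, the sets P^π_α := conv({(1-α)(π·w) + α(σ·w) : σ ∈ S_d}) for distinct permutations π ≠ π' are pairwise disjoint: P^π_α ∩ P^{π'}_α = ∅. -/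
/-- The scaled copies of the permutahedron anchored at distinct vertices, with scaling
α < 1/d, are pairwise disjoint. -/
theorem permutahedron_scaled_copies_disjoint (d : ℕ) (hd : 2 ≤ d)
    (w : Fin d → ℝ) (hw : ∀ i : Fin d, w i = (i : ℝ) / ((((d:ℝ) - 1)/2) * d))
    (α : ℝ) (hα : 0 < α ∧ α < 1/(d:ℝ))
    (π π' : Equiv.Perm (Fin d)) (hne : π ≠ π') :
    Disjoint
      (convexHull ℝ {x : Fin d → ℝ |
        ∃ σ : Equiv.Perm (Fin d), ∀ t, x t = (1 - α) * w (π.symm t) + α * w (σ.symm t)})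
      (convexHull ℝ {x : Fin d → ℝ |
        ∃ σ : Equiv.Perm (Fin d), ∀ t, x t = (1 - α) * w (π'.symm t) + α * w (σ.symm t)}) := by
  obtain ⟨hα0, hα1⟩ := hα
  have hd2 : (2:ℝ) ≤ (d:ℝ) := by exact_mod_cast hd
  set D : ℝ := (((d:ℝ) - 1)/2) * d with hDdef
  have hD : 0 < D := by nlinarith
  have hαd : α * d < 1 := by
    have hdpos : (0:ℝ) < d := by linarith
    calc α * d < (1/(d:ℝ)) * d := by exact mul_lt_mul_of_pos_right hα1 hdpos
    _ = 1 := by field_simp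
  have h1α : 0 < 1 - α := by nlinarith
  have hFbound : ∀ k : Fin d, ((k : ℕ) : ℝ) ≤ (d:ℝ) - 1 := by
    intro k
    have h := Nat.succ_le_of_lt k.isLt
    have : ((k:ℕ):ℝ) + 1 ≤ (d:ℝ) := by exact_mod_cast h
    linarith
  -- The open ordering cone associated with ρ
  have hC : ∀ ρ : Equiv.Perm (Fin d),
      convexHull ℝ {x : Fin d → ℝ |
        ∃ σ : Equiv.Perm (Fin d), ∀ t, x t = (1 - α) * w (ρ.symm t) + α * w (σ.symm t)}
      ⊆ {u : Fin d → ℝ | StrictMono fun i => u (ρ i)} := by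
    intro ρ
    apply convexHull_min
    · rintro x ⟨σ, hx⟩ i j hij
      simp only
      rw [hx, hx, Equiv.symm_apply_apply, Equiv.symm_apply_apply, hw, hw, hw, hw]
      have hij' : (i:ℝ) + 1 ≤ (j:ℝ) := by exact_mod_cast hij
      have ha : (0:ℝ) ≤ ((σ.symm (ρ j) : Fin d) : ℝ) := by positivity
      have hb : ((σ.symm (ρ i) : Fin d) : ℝ) ≤ (d:ℝ) - 1 := hFbound _
      have e1 : (1-α)*((i:ℝ)+1) ≤ (1-α)*(j:ℝ) := mul_le_mul_of_nonneg_left hij' h1α.le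
      have e2 : α*((σ.symm (ρ i) : Fin d) : ℝ) ≤ α*((d:ℝ)-1) := mul_le_mul_of_nonneg_left hb hα0.le
      have e3 : 0 ≤ α*((σ.symm (ρ j) : Fin d) : ℝ) := mul_nonneg hα0.le ha
      have key : (1 - α) * (i:ℝ) + α * ((σ.symm (ρ i) : Fin d) : ℝ)
          < (1 - α) * (j:ℝ) + α * ((σ.symm (ρ j) : Fin d) : ℝ) := by nlinarith [e1, e2, e3]
      have hrw : ∀ a b : ℝ, (1-α)*(a/D)+α*(b/D) = ((1-α)*a+α*b)/D := by
        intro a b; ring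
      rw [hrw, hrw]
      exact div_lt_div_of_pos_right key hD
    · intro x hx y hy a b ha hb hab i j hij
      have hx' := hx hij
      have hy' := hy hij
      simp only [Pi.add_apply, Pi.smul_apply, smul_eq_mul] at *
      rcases eq_or_lt_of_le ha with h | h
      · have hb1 : b = 1 := by linarith
        rw [← h, hb1]; simpa using hy'
      · nlinarith
  rw [Set.disjoint_left]
  intro u hu hu'
  have h1 : StrictMono fun i => u (π i) := hC π hu
  have h2 : StrictMono fun i => u (π' i) := hC π' hu'
  apply hne
  have hg : StrictMono (π.trans π'.symm : Fin d → Fin d) := by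
    intro i j hij
    have h3 : u (π' (π'.symm (π i))) < u (π' (π'.symm (π j))) := by
      simpa using h1 hij
    exact h2.lt_iff_lt.mp h3
  have hiso := Subsingleton.elim
    (StrictMono.orderIsoOfSurjective _ hg (π.trans π'.symm).surjective)
    (OrderIso.refl (Fin d))
  apply Equiv.ext
  intro k
  have hk : π'.symm (π k) = k := by
    have := congrArg (fun e : Fin d ≃o Fin d => e k) hiso
    simpa using this
  have := congrArg π' hk
  simpa using this
end

section
/- Let P ⊂ R^d be a polytope with n distinct vertices v_1,...,v_n, n > d+1, let φ(p) = Σ_i p_i v_i, and let ψ : R^d → {1,...,n} be any function (link). Define the hallucination set H = {u ∈ P : ∃ p ∈ Δ_n with φ(p) = u, p_{ψ(u)} = 0}. Then H = ⋃_{k=1}^{n} (conv({v_1,...,v_n} \ {v_k}) ∩ ψ^{-1}(k)), and H is nonempty. -/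
/-- Characterization and nonemptiness of the hallucination region. -/
theorem hallucination_region (d n : ℕ) (hn : n > d + 1)
    (v : Fin n → EuclideanSpace ℝ (Fin d)) (hinj : Function.Injective v)
    (ψ : EuclideanSpace ℝ (Fin d) → Fin n) :
    let H : Set (EuclideanSpace ℝ (Fin d)) :=
      {u ∈ convexHull ℝ (Set.range v) |
        ∃ p ∈ stdSimplex ℝ (Fin n), (∑ i, p i • v i) = u ∧ p (ψ u) = 0}
    H = (⋃ k, convexHull ℝ (Set.range v \ {v k}) ∩ ψ ⁻¹' {k}) ∧ H.Nonempty := by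
  classical
  intro H
  -- subset lemma
  have himg : ∀ k : Fin n, ∀ S : Set (Fin n), k ∉ S → v '' S ⊆ Set.range v \ {v k} := by
    rintro k S hk _ ⟨i, hi, rfl⟩
    refine ⟨⟨i, rfl⟩, fun h => hk ?_⟩
    have : i = k := hinj h
    rwa [this] at hi
  have heq : H = ⋃ k, convexHull ℝ (Set.range v \ {v k}) ∩ ψ ⁻¹' {k} := by
    ext u
    simp only [H, Set.mem_setOf_eq, Set.mem_iUnion, Set.mem_inter_iff, Set.mem_preimage,
      Set.mem_singleton_iff]
    constructor
    · rintro ⟨hu, p, hp, hsum, hzero⟩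
      refine ⟨ψ u, ?_, rfl⟩
      obtain ⟨hp0, hp1⟩ := hp
      have hsum' : ∑ i ∈ Finset.univ.erase (ψ u), p i = 1 := by
        rw [Finset.sum_erase _ hzero, hp1]
      have hcm : (Finset.univ.erase (ψ u)).centerMass p v = u := by
        rw [Finset.centerMass_eq_of_sum_1 _ _ hsum',
          Finset.sum_erase (f := fun i => p i • v i) Finset.univ
            (by simp [hzero]), hsum]
      have hmem : (Finset.univ.erase (ψ u)).centerMass p v ∈
          convexHull ℝ (Set.range v \ {v (ψ u)}) :=
        Finset.centerMass_mem_convexHull _ (fun i _ => hp0 i) (by rw [hsum']; norm_num)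
          (fun i hi => ⟨⟨i, rfl⟩, fun h =>
            (Finset.mem_erase.mp hi).1 (hinj (Set.mem_singleton_iff.mp h))⟩)
      rwa [hcm] at hmem
    · rintro ⟨k, hconv, hψ⟩
      have hset : Set.range v \ {v k} = ↑((Finset.univ.erase k).image v) := by
        ext x
        simp only [Set.mem_diff, Set.mem_range, Set.mem_singleton_iff, Finset.coe_image,
          Finset.coe_erase, Set.mem_image, Set.mem_diff, Finset.coe_univ, Set.mem_univ,
          true_and, Set.mem_singleton_iff]
        constructor
        · rintro ⟨⟨i, rfl⟩, hne⟩
          exact ⟨i, fun h => hne (by rw [h]), rfl⟩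
        · rintro ⟨i, hik, rfl⟩
          exact ⟨⟨i, rfl⟩, fun h => hik (hinj h)⟩
      rw [hset] at hconv
      obtain ⟨w, hw0, hw1, hwx⟩ := Finset.mem_convexHull'.mp hconv
      have hinjOn : Set.InjOn v ↑(Finset.univ.erase k) := hinj.injOn
      set p : Fin n → ℝ := fun i => if i = k then 0 else w (v i) with hpdef
      have hpsum : ∑ i, p i = 1 := by
        rw [← Finset.add_sum_erase _ p (Finset.mem_univ k)]
        simp only [hpdef, if_pos rfl, zero_add]
        rw [Finset.sum_congr rfl (fun i hi => if_neg (Finset.mem_erase.mp hi).1)]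
        rw [Finset.sum_image (fun a ha b hb => hinjOn ha hb)] at hw1
        exact hw1
      have hpvsum : ∑ i, p i • v i = u := by
        rw [← Finset.add_sum_erase _ (fun i => p i • v i) (Finset.mem_univ k)]
        simp only [hpdef, if_pos rfl, zero_smul, zero_add]
        rw [Finset.sum_congr rfl (fun i hi => by rw [if_neg (Finset.mem_erase.mp hi).1])]
        rw [Finset.sum_image (g := v) (f := fun y => w y • y) (fun a ha b hb => hinjOn ha hb)] at hwx
        exact hwx
      refine ⟨?_, p, ⟨fun i => ?_, hpsum⟩, hpvsum, ?_⟩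
      · exact convexHull_mono Set.diff_subset (by rw [hset]; exact hconv)
      · by_cases h : i = k
        · simp [hpdef, h]
        · simp only [hpdef, if_neg h]; exact hw0 _ (by
            simp only [Finset.mem_image]
            exact ⟨i, Finset.mem_erase.mpr ⟨h, Finset.mem_univ i⟩, rfl⟩)
      · rw [hψ]; simp [hpdef]
  refine ⟨heq, ?_⟩
  -- nonemptiness via Radon
  have hdep : ¬ AffineIndependent ℝ v := by
    intro h
    have h1 := h.card_le_finrank_succ
    have h2 : Module.finrank ℝ (vectorSpan ℝ (Set.range v)) ≤ d := by
      have := Submodule.finrank_le (vectorSpan ℝ (Set.range v))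
      rwa [finrank_euclideanSpace_fin] at this
    simp only [Fintype.card_fin] at h1
    omega
  obtain ⟨I, x, hxI, hxIc⟩ := Convex.radon_partition hdep
  refine ⟨x, ?_⟩
  rw [heq]
  simp only [Set.mem_iUnion, Set.mem_inter_iff, Set.mem_preimage, Set.mem_singleton_iff]
  refine ⟨ψ x, ?_, rfl⟩
  by_cases h : ψ x ∈ I
  · exact convexHull_mono (himg (ψ x) Iᶜ (by simpa)) hxIc
  · exact convexHull_mono (himg (ψ x) I h) hxI
end
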